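/- arXiv:2605.11566 — 4 statements merged into one kernel-verified Lean document; each statement's English description precedes it below -/
import Mathlib

section
/- Let (Σ, i, q) be a discrete twist over an ample Hausdorff groupoid G. Then q⁻¹(Iso(G)°) = Iso(Σ)°, where Iso(·)° denotes the interior of the isotropy bundle. -/
open Set Function TopologicalSpace Classical
noncomputable section

universe u v w

/-- An étale topological groupoid, encoded with total operations:
`mul a b` is only meaningful when `src a = rng b`. -/
structure EtaleGroupoid (G : Type u) [TopologicalSpace G] where
  mul : G → G → G
  inv : G → G
  src : G → G
  rng : G → G
  rng_mul_self : ∀ g, mul (rng g) g = g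
  mul_src_self : ∀ g, mul g (src g) = g
  src_inv : ∀ g, src (inv g) = rng g
  rng_inv : ∀ g, rng (inv g) = src g
  inv_inv : ∀ g, inv (inv g) = g
  inv_mul_self : ∀ g, mul (inv g) g = src g
  mul_inv_self : ∀ g, mul g (inv g) = rng g
  mul_assoc' : ∀ a b c, src a = rng b → src b = rng c →
    mul (mul a b) c = mul a (mul b c)
  src_mul : ∀ a b, src a = rng b → src (mul a b) = src b
  rng_mul : ∀ a b, src a = rng b → rng (mul a b) = rng a
  continuous_inv : Continuous inv
  continuousOn_mul :
    ContinuousOn (fun p : G × G => mul p.1 p.2) {p : G × G | src p.1 = rng p.2}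
  isLocalHomeomorph_src : IsLocalHomeomorph src

namespace EtaleGroupoid

variable {G : Type u} [TopologicalSpace G] (𝒢 : EtaleGroupoid G)

/-- The unit space `G⁽⁰⁾`. -/
def unitSpace : Set G := Set.range 𝒢.src

/-- The isotropy bundle `Iso(G) = {γ : r γ = s γ}`. -/
def iso : Set G := {g | 𝒢.rng g = 𝒢.src g}

/-- The isotropy group `Gᵤᵘ` at a unit `u`. -/
def isoAt (u : G) : Set G := {g | 𝒢.rng g = u ∧ 𝒢.src g = u}

/-- `U` is a bisection: `src` and `rng` are injective on `U`. -/
def IsBisection (U : Set G) : Prop := Set.InjOn 𝒢.src U ∧ Set.InjOn 𝒢.rng U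

/-- `U` is a compact open bisection. -/
def IsCOB (U : Set G) : Prop := IsCompact U ∧ IsOpen U ∧ 𝒢.IsBisection U

/-- Pointwise inverse of a set. -/
def setInv (U : Set G) : Set G := 𝒢.inv '' U

/-- Pointwise product of two sets (only composable products). -/
def setMul (U V : Set G) : Set G :=
  {g | ∃ a ∈ U, ∃ b ∈ V, 𝒢.src a = 𝒢.rng b ∧ g = 𝒢.mul a b}

/-- `H` is a subgroupoid of `G`. -/
def IsSubgroupoid (H : Set G) : Prop :=
  (∀ a ∈ H, 𝒢.inv a ∈ H) ∧
  (∀ a ∈ H, ∀ b ∈ H, 𝒢.src a = 𝒢.rng b → 𝒢.mul a b ∈ H) ∧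
  (∀ a ∈ H, 𝒢.src a ∈ H)

/-- The groupoid is effective: the interior of the isotropy is the unit space. -/
def Effective : Prop := interior 𝒢.iso = 𝒢.unitSpace

/-- A continuous (i.e. locally constant) `Rˣ`-valued 2-cocycle on `G`. -/
def IsCocycle {R : Type w} [CommRing R] (c : G → G → Rˣ) : Prop :=
  IsLocallyConstant (fun p : {p : G × G // 𝒢.src p.1 = 𝒢.rng p.2} => c p.1.1 p.1.2) ∧
  (∀ a b d, 𝒢.src a = 𝒢.rng b → 𝒢.src b = 𝒢.rng d →
    c a b * c (𝒢.mul a b) d = c b d * c a (𝒢.mul b d)) ∧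
  (∀ g, c (𝒢.rng g) g = 1 ∧ c g (𝒢.src g) = 1)

/-- Membership in the (cocycle-twisted) Steinberg algebra `A_R(G)`:
locally constant, compactly supported functions `G → R`. -/
def MemSt {R : Type w} [CommRing R] (f : G → R) : Prop :=
  IsLocallyConstant f ∧ ∃ K : Set G, IsCompact K ∧ Function.support f ⊆ K

/-- Convolution on `A_R(G;σ)` twisted by a 2-cocycle `c`. -/
noncomputable def convC {R : Type w} [CommRing R] (c : G → G → Rˣ) (f g : G → R) :
    G → R := fun γ =>
  ∑ᶠ p : G × G,
    if 𝒢.src p.1 = 𝒢.rng p.2 ∧ 𝒢.mul p.1 p.2 = γ then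
      (c p.1 p.2 : R) * f p.1 * g p.2 else 0

/-- A continuous `Γ`-grading on `G` (for a discrete group `Γ`). -/
def IsGrading {Γ : Type*} [Group Γ] (c : G → Γ) : Prop :=
  IsLocallyConstant c ∧ ∀ a b, 𝒢.src a = 𝒢.rng b → c (𝒢.mul a b) = c a * c b

end EtaleGroupoid

/-- An ample groupoid: étale with a basis of compact open bisections. -/
structure AmpleGroupoid (G : Type u) [TopologicalSpace G] extends EtaleGroupoid G where
  ample : TopologicalSpace.IsTopologicalBasis {U : Set G | toEtaleGroupoid.IsCOB U}

/-- A discrete twist `G⁽⁰⁾ × Rˣ → Σ → G` over an ample groupoid `G`. -/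
structure DiscreteTwist (R : Type w) [CommRing R] {G : Type u} {S : Type v}
    [TopologicalSpace G] [TopologicalSpace S]
    (𝒢 : AmpleGroupoid G) (𝒮 : EtaleGroupoid S) where
  i : G → Rˣ → S
  q : S → G
  continuousOn_i : ∀ t : Rˣ, ContinuousOn (fun x => i x t) 𝒢.unitSpace
  continuous_q : Continuous q
  i_injOn : Set.InjOn (fun p : G × Rˣ => i p.1 p.2) (𝒢.unitSpace ×ˢ (Set.univ : Set Rˣ))
  q_surj : Function.Surjective q
  exact' : ∀ x ∈ 𝒢.unitSpace, q ⁻¹' {x} = {σ | ∃ t : Rˣ, σ = i x t}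
  i_mul : ∀ x ∈ 𝒢.unitSpace, ∀ s t : Rˣ, 𝒮.mul (i x s) (i x t) = i x (s * t)
  unit_eq : 𝒮.unitSpace = (fun x => i x 1) '' 𝒢.unitSpace
  q_mul : ∀ a b, 𝒮.src a = 𝒮.rng b → q (𝒮.mul a b) = 𝒢.mul (q a) (q b)
  q_inv : ∀ a, q (𝒮.inv a) = 𝒢.inv (q a)
  q_src : ∀ a, q (𝒮.src a) = 𝒢.src (q a)
  q_rng : ∀ a, q (𝒮.rng a) = 𝒢.rng (q a)
  q_unit_bij : Set.BijOn q 𝒮.unitSpace 𝒢.unitSpace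
  central : ∀ (σ : S) (t : Rˣ),
    𝒮.mul (i (𝒢.rng (q σ)) t) σ = 𝒮.mul σ (i (𝒢.src (q σ)) t)
  loc_triv : ∀ α : G, ∃ B : Set G, IsOpen B ∧ α ∈ B ∧ 𝒢.IsBisection B ∧
    ∃ P : G → S, ContinuousOn P B ∧ (∀ β ∈ B, q (P β) = β) ∧
      (∀ t : Rˣ, ContinuousOn (fun β => 𝒮.mul (i (𝒢.rng β) t) (P β)) B) ∧
      (∀ σ : S, q σ ∈ B →
        ∃! p : G × Rˣ, p.1 ∈ B ∧ 𝒮.mul (i (𝒢.rng p.1) p.2) (P p.1) = σ) ∧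
      (∀ t : Rˣ, ∀ V ⊆ B, IsOpen V →
        IsOpen ((fun β => 𝒮.mul (i (𝒢.rng β) t) (P β)) '' V))

namespace DiscreteTwist

variable {R : Type w} [CommRing R] {G : Type u} {S : Type v}
  [TopologicalSpace G] [TopologicalSpace S]
  {𝒢 : AmpleGroupoid G} {𝒮 : EtaleGroupoid S} (T : DiscreteTwist R 𝒢 𝒮)

/-- The action of `Rˣ` on `Σ`: `t • σ = i(r σ, t) σ`. -/
def act (t : Rˣ) (σ : S) : S := 𝒮.mul (T.i (𝒢.rng (T.q σ)) t) σ

/-- The function `1̃_X` associated to a subset `X ⊆ Σ`. -/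
noncomputable def tilde (X : Set S) : S → R := fun σ =>
  if h : ∃ t : Rˣ, σ ∈ T.act t '' X then (((Classical.choose h)⁻¹ : Rˣ) : R) else 0

/-- Membership in the twisted Steinberg algebra `A_R(G;Σ)`: locally constant,
`Rˣ`-contravariant functions with compact image of the support in `G`. -/
def MemA (f : S → R) : Prop :=
  IsLocallyConstant f ∧
  (∀ (t : Rˣ) (σ : S), f (T.act t σ) = ((t⁻¹ : Rˣ) : R) * f σ) ∧
  IsCompact (T.q '' Function.support f)

/-- A (not necessarily continuous) section of `q`. -/
noncomputable def sec : G → S := Function.surjInv T.q_surj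

/-- Convolution on `A_R(G;Σ)`, defined via the section `sec`. -/
noncomputable def conv (f g : S → R) : S → R := fun σ =>
  ∑ᶠ α : G,
    if 𝒢.rng α = 𝒢.rng (T.q σ) then
      f (T.sec α) * g (𝒮.mul (𝒮.inv (T.sec α)) σ) else 0

end DiscreteTwist

end

section AuxLemmas

variable {H : Type*} [TopologicalSpace H] (ℋ : EtaleGroupoid H)

lemma aux_src_mem_unit (g : H) : ℋ.src g ∈ ℋ.unitSpace := ⟨g, rfl⟩

lemma aux_rng_mem_unit (g : H) : ℋ.rng g ∈ ℋ.unitSpace := ⟨ℋ.inv g, ℋ.src_inv g⟩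

lemma aux_src_unit {x : H} (hx : x ∈ ℋ.unitSpace) : ℋ.src x = x := by
  obtain ⟨g, rfl⟩ := hx
  have h := ℋ.src_mul (ℋ.inv g) g (ℋ.src_inv g)
  rwa [ℋ.inv_mul_self] at h

end AuxLemmas

section TwistAux

variable {R : Type w} [CommRing R] {G : Type u} {S : Type v}
  [TopologicalSpace G] [TopologicalSpace S]
  {𝒢 : AmpleGroupoid G} {𝒮 : EtaleGroupoid S} (T : DiscreteTwist R 𝒢 𝒮)

lemma aux_q_i {x : G} (hx : x ∈ 𝒢.unitSpace) (t : Rˣ) : T.q (T.i x t) = x := by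
  have h := T.exact' x hx
  have hmem : T.i x t ∈ T.q ⁻¹' {x} := by rw [h]; exact ⟨t, rfl⟩
  simpa using hmem

lemma aux_iso_iff (σ : S) : σ ∈ 𝒮.iso ↔ T.q σ ∈ 𝒢.iso := by
  constructor
  · intro h
    have : T.q (𝒮.rng σ) = T.q (𝒮.src σ) := by rw [h]
    rw [T.q_rng, T.q_src] at this
    exact this
  · intro h
    have hq : T.q (𝒮.rng σ) = T.q (𝒮.src σ) := by rw [T.q_rng, T.q_src]; exact h
    exact T.q_unit_bij.injOn (aux_rng_mem_unit 𝒮 σ) (aux_src_mem_unit 𝒮 σ) hq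

lemma aux_q_isOpenMap : IsOpenMap T.q := by
  intro U hU
  rw [isOpen_iff_mem_nhds]
  rintro x ⟨σ, hσU, rfl⟩
  obtain ⟨B, hBopen, hmem, hBbis, P, hPcont, hqP, hcont, huniq, himg⟩ := T.loc_triv (T.q σ)
  obtain ⟨⟨β₀, t₀⟩, ⟨hβ₀B, hσeq⟩, -⟩ := huniq σ hmem
  set f : G → S := fun β => 𝒮.mul (T.i (𝒢.rng β) t₀) (P β) with hf
  have key : ∀ β ∈ B, T.q (f β) = β := by
    intro β hβ
    have hxu : 𝒢.rng β ∈ 𝒢.unitSpace := aux_rng_mem_unit 𝒢.toEtaleGroupoid β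
    have hqi : T.q (T.i (𝒢.rng β) t₀) = 𝒢.rng β := aux_q_i T hxu t₀
    have hq1 : T.q (𝒮.src (T.i (𝒢.rng β) t₀)) = 𝒢.rng β := by
      rw [T.q_src, hqi, aux_src_unit 𝒢.toEtaleGroupoid hxu]
    have hq2 : T.q (𝒮.rng (P β)) = 𝒢.rng β := by
      rw [T.q_rng, hqP β hβ]
    have hcomp : 𝒮.src (T.i (𝒢.rng β) t₀) = 𝒮.rng (P β) :=
      T.q_unit_bij.injOn (aux_src_mem_unit 𝒮 _) (aux_rng_mem_unit 𝒮 _)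
        (hq1.trans hq2.symm)
    rw [hf]
    simp only
    rw [T.q_mul _ _ hcomp, hqi, hqP β hβ, 𝒢.rng_mul_self]
  have hfeq : T.q σ = β₀ := by
    have := key β₀ hβ₀B
    rw [hf] at this
    simp only at this
    rw [hσeq] at this
    exact this
  set V : Set G := B ∩ f ⁻¹' U with hV
  have hVopen : IsOpen V := (hcont t₀).isOpen_inter_preimage hBopen hU
  have hβ₀V : β₀ ∈ V := by
    refine ⟨hβ₀B, ?_⟩
    show f β₀ ∈ U
    rw [hf]; simp only; rw [hσeq]; exact hσU
  have hVsub : V ⊆ T.q '' U := by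
    rintro β ⟨hβB, hβU⟩
    exact ⟨f β, hβU, key β hβB⟩
  rw [hfeq]
  exact Filter.mem_of_superset (hVopen.mem_nhds hβ₀V) hVsub

end TwistAux

/-- for a discrete twist `(Σ, i, q)` over an ample Hausdorff
groupoid `G`, one has `q⁻¹(Iso(G)°) = Iso(Σ)°`. -/
theorem stmt_2 {R : Type*} [CommRing R] {G S : Type*}
    [TopologicalSpace G] [TopologicalSpace S] [T2Space G] [T2Space S]
    {𝒢 : AmpleGroupoid G} {𝒮 : EtaleGroupoid S} (T : DiscreteTwist R 𝒢 𝒮) :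
    T.q ⁻¹' (interior 𝒢.iso) = interior 𝒮.iso := by
  apply Set.Subset.antisymm
  · apply interior_maximal
    · intro σ hσ
      exact (aux_iso_iff T σ).mpr (interior_subset hσ)
    · exact isOpen_interior.preimage T.continuous_q
  · intro σ hσ
    have himg : T.q '' interior 𝒮.iso ⊆ 𝒢.iso := by
      rintro _ ⟨τ, hτ, rfl⟩
      exact (aux_iso_iff T τ).mp (interior_subset hτ)
    have hopen : IsOpen (T.q '' interior 𝒮.iso) := aux_q_isOpenMap T _ isOpen_interior
    exact interior_maximal himg hopen ⟨σ, hσ, rfl⟩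
end

section
/- Let (Σ, i, q) be a discrete twist over an ample Hausdorff groupoid G. If g = Σ_{D ∈ F} a_D 1̃_D where F is a finite collection of compact open bisections of Σ with mutually disjoint images in G and a_D ∈ R, then for any D₀ ∈ F, the function f = 1̃_{D₀⁻¹} * g satisfies f(α) = a_{D₀} for every α ∈ s(D₀) ⊆ Σ⁽⁰⁾. In particular if a_{D₀} ≠ 0 then f is nonzero on Σ⁽⁰⁾. -/
open Set Function TopologicalSpace Classical
section AuxEG

universe u'

variable {G : Type u'} [TopologicalSpace G] (E : EtaleGroupoid G)

lemma EG.src_src (g : G) : E.src (E.src g) = E.src g := by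
  have h := E.src_mul (E.inv g) g (E.src_inv g)
  rwa [E.inv_mul_self] at h

lemma EG.rng_src (g : G) : E.rng (E.src g) = E.src g := by
  have h := E.rng_mul (E.inv g) g (E.src_inv g)
  rwa [E.inv_mul_self, E.rng_inv] at h

lemma EG.src_unit {u : G} (hu : u ∈ E.unitSpace) : E.src u = u := by
  obtain ⟨g, rfl⟩ := hu; exact EG.src_src E g

lemma EG.rng_unit {u : G} (hu : u ∈ E.unitSpace) : E.rng u = u := by
  obtain ⟨g, rfl⟩ := hu; exact EG.rng_src E g

lemma EG.src_mem (g : G) : E.src g ∈ E.unitSpace := ⟨g, rfl⟩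

lemma EG.rng_mem (g : G) : E.rng g ∈ E.unitSpace := ⟨E.inv g, E.src_inv g⟩

lemma EG.inv_eq_of {c y : G} (h1 : E.mul y c = E.src c) (h2 : E.src y = E.rng c) :
    E.inv c = y := by
  have h3 : E.src c = E.rng (E.inv c) := (E.rng_inv c).symm
  calc E.inv c = E.mul (E.rng (E.inv c)) (E.inv c) := (E.rng_mul_self _).symm
    _ = E.mul (E.mul y c) (E.inv c) := by rw [← h3, ← h1]
    _ = E.mul y (E.mul c (E.inv c)) := E.mul_assoc' y c (E.inv c) h2 h3
    _ = E.mul y (E.rng c) := by rw [E.mul_inv_self]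
    _ = y := by rw [← h2, E.mul_src_self]

lemma EG.inv_mul_rev {a b : G} (h : E.src a = E.rng b) :
    E.inv (E.mul a b) = E.mul (E.inv b) (E.inv a) := by
  have hib : E.src (E.inv b) = E.rng (E.inv a) := by
    rw [E.src_inv, E.rng_inv, h]
  have hia : E.src (E.inv a) = E.rng (E.mul a b) := by
    rw [E.src_inv, E.rng_mul a b h]
  have key : E.mul (E.inv a) (E.mul a b) = b := by
    rw [← E.mul_assoc' _ _ _ (E.src_inv a) h, E.inv_mul_self, h, E.rng_mul_self]
  refine EG.inv_eq_of E ?_ ?_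
  · rw [E.mul_assoc' _ _ _ hib hia, key, E.inv_mul_self, E.src_mul a b h]
  · rw [E.src_mul _ _ hib, hia]

end AuxEG

namespace DiscreteTwist

section AuxTwist

variable {R : Type w} [CommRing R] {G : Type u} {S : Type v}
  [TopologicalSpace G] [TopologicalSpace S]
  {𝒢 : AmpleGroupoid G} {𝒮 : EtaleGroupoid S} (T : DiscreteTwist R 𝒢 𝒮)

lemma q_i {x : G} (hx : x ∈ 𝒢.unitSpace) (t : Rˣ) : T.q (T.i x t) = x := by
  have : T.i x t ∈ T.q ⁻¹' {x} := by
    rw [T.exact' x hx]; exact ⟨t, rfl⟩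
  simpa using this

lemma i_one_mem {x : G} (hx : x ∈ 𝒢.unitSpace) : T.i x 1 ∈ 𝒮.unitSpace := by
  rw [T.unit_eq]; exact ⟨x, hx, rfl⟩

lemma unit_eq_of_q {σ₁ σ₂ : S} (h1 : σ₁ ∈ 𝒮.unitSpace) (h2 : σ₂ ∈ 𝒮.unitSpace)
    (h : T.q σ₁ = T.q σ₂) : σ₁ = σ₂ :=
  T.q_unit_bij.injOn h1 h2 h

lemma src_i {x : G} (hx : x ∈ 𝒢.unitSpace) (t : Rˣ) : 𝒮.src (T.i x t) = T.i x 1 := by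
  refine T.unit_eq_of_q (EG.src_mem 𝒮 _) (T.i_one_mem hx) ?_
  rw [T.q_src, T.q_i hx, T.q_i hx, EG.src_unit 𝒢.toEtaleGroupoid hx]

lemma rng_i {x : G} (hx : x ∈ 𝒢.unitSpace) (t : Rˣ) : 𝒮.rng (T.i x t) = T.i x 1 := by
  refine T.unit_eq_of_q (EG.rng_mem 𝒮 _) (T.i_one_mem hx) ?_
  rw [T.q_rng, T.q_i hx, T.q_i hx, EG.rng_unit 𝒢.toEtaleGroupoid hx]

lemma rng_eq_i_one (τ : S) : 𝒮.rng τ = T.i (𝒢.rng (T.q τ)) 1 := by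
  refine T.unit_eq_of_q (EG.rng_mem 𝒮 _) (T.i_one_mem (EG.rng_mem _ _)) ?_
  rw [T.q_rng, T.q_i (EG.rng_mem _ _)]

lemma src_eq_i_one (τ : S) : 𝒮.src τ = T.i (𝒢.src (T.q τ)) 1 := by
  refine T.unit_eq_of_q (EG.src_mem 𝒮 _) (T.i_one_mem (EG.src_mem _ _)) ?_
  rw [T.q_src, T.q_i (EG.src_mem _ _)]

lemma src_i_rng (t : Rˣ) (τ : S) :
    𝒮.src (T.i (𝒢.rng (T.q τ)) t) = 𝒮.rng τ := by
  rw [T.src_i (EG.rng_mem _ _), T.rng_eq_i_one]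

lemma q_act (t : Rˣ) (τ : S) : T.q (T.act t τ) = T.q τ := by
  unfold act
  rw [T.q_mul _ _ (T.src_i_rng t τ), T.q_i (EG.rng_mem _ _), 𝒢.rng_mul_self]

lemma act_one (τ : S) : T.act 1 τ = τ := by
  unfold act
  rw [← T.rng_eq_i_one, 𝒮.rng_mul_self]

lemma src_act (t : Rˣ) (τ : S) : 𝒮.src (T.act t τ) = 𝒮.src τ := by
  unfold act
  rw [𝒮.src_mul _ _ (T.src_i_rng t τ)]

lemma act_cancel {s t : Rˣ} {τ : S} (h : T.act s τ = T.act t τ) : s = t := by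
  have hxu : 𝒢.rng (T.q τ) ∈ 𝒢.unitSpace := EG.rng_mem _ _
  have key : ∀ r : Rˣ, 𝒮.mul (T.act r τ) (𝒮.inv τ) = T.i (𝒢.rng (T.q τ)) r := by
    intro r
    unfold act
    rw [𝒮.mul_assoc' _ _ _ (T.src_i_rng r τ) (𝒮.rng_inv τ).symm, 𝒮.mul_inv_self,
      T.rng_eq_i_one, ← T.src_i hxu r, 𝒮.mul_src_self]
  have : T.i (𝒢.rng (T.q τ)) s = T.i (𝒢.rng (T.q τ)) t := by rw [← key s, ← key t, h]
  have := T.i_injOn (Set.mk_mem_prod hxu (Set.mem_univ s))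
    (Set.mk_mem_prod hxu (Set.mem_univ t)) this
  exact (Prod.ext_iff.mp this).2

lemma exists_act_of_q_eq {σ' τ : S} (h : T.q σ' = T.q τ) : ∃ t : Rˣ, σ' = T.act t τ := by
  have hsrc : 𝒮.src σ' = 𝒮.src τ := by
    refine T.unit_eq_of_q (EG.src_mem 𝒮 _) (EG.src_mem 𝒮 _) ?_
    rw [T.q_src, T.q_src, h]
  have hc : 𝒮.src σ' = 𝒮.rng (𝒮.inv τ) := by rw [hsrc, 𝒮.rng_inv]
  set ρ := 𝒮.mul σ' (𝒮.inv τ) with hρ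
  have hx : 𝒢.rng (T.q τ) ∈ 𝒢.unitSpace := EG.rng_mem _ _
  have hqρ : T.q ρ = 𝒢.rng (T.q τ) := by
    rw [hρ, T.q_mul _ _ hc, T.q_inv, h, 𝒢.mul_inv_self]
  have : ρ ∈ T.q ⁻¹' {𝒢.rng (T.q τ)} := by simpa using hqρ
  rw [T.exact' _ hx] at this
  obtain ⟨t, ht⟩ := this
  refine ⟨t, ?_⟩
  have : 𝒮.mul ρ τ = σ' := by
    rw [hρ, 𝒮.mul_assoc' _ _ _ hc (𝒮.src_inv τ), 𝒮.inv_mul_self, ← hsrc,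
      𝒮.mul_src_self]
  rw [← this, ht]; rfl

lemma inv_i {x : G} (hx : x ∈ 𝒢.unitSpace) (t : Rˣ) :
    𝒮.inv (T.i x t) = T.i x t⁻¹ := by
  refine EG.inv_eq_of 𝒮 ?_ ?_
  · rw [T.i_mul x hx, inv_mul_cancel, T.src_i hx]
  · rw [T.src_i hx, T.rng_i hx]

lemma inv_act (t : Rˣ) (τ : S) : 𝒮.inv (T.act t τ) = T.act t⁻¹ (𝒮.inv τ) := by
  have hx : 𝒢.rng (T.q τ) ∈ 𝒢.unitSpace := EG.rng_mem _ _
  have : 𝒮.inv (T.act t τ) = 𝒮.mul (𝒮.inv τ) (T.i (𝒢.rng (T.q τ)) t⁻¹) := by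
    unfold act
    rw [EG.inv_mul_rev 𝒮 (T.src_i_rng t τ), T.inv_i hx]
  rw [this]
  have hcen := T.central (𝒮.inv τ) t⁻¹
  unfold act
  rw [hcen, T.q_inv, 𝒢.src_inv]

/-- `q`-injectivity of a set. -/
def QInj (X : Set S) : Prop := ∀ τ₁ ∈ X, ∀ τ₂ ∈ X, T.q τ₁ = T.q τ₂ → τ₁ = τ₂

lemma qinj_of_bisection {X : Set S} (hX : 𝒮.IsBisection X) : T.QInj X := by
  intro τ₁ h1 τ₂ h2 h
  refine hX.1 h1 h2 ?_
  refine T.unit_eq_of_q (EG.src_mem 𝒮 _) (EG.src_mem 𝒮 _) ?_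
  rw [T.q_src, T.q_src, h]

lemma qinj_setInv {X : Set S} (hX : 𝒮.IsBisection X) : T.QInj (𝒮.setInv X) := by
  rintro _ ⟨τ₁, h1, rfl⟩ _ ⟨τ₂, h2, rfl⟩ h
  rw [T.q_inv, T.q_inv] at h
  have : 𝒢.src (T.q τ₁) = 𝒢.src (T.q τ₂) := by
    rw [← 𝒢.rng_inv, ← 𝒢.rng_inv, h]
  have hsrc : 𝒮.src τ₁ = 𝒮.src τ₂ := by
    refine T.unit_eq_of_q (EG.src_mem 𝒮 _) (EG.src_mem 𝒮 _) ?_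
    rw [T.q_src, T.q_src, this]
  rw [hX.1 h1 h2 hsrc]

lemma tilde_act {X : Set S} (hX : T.QInj X) {τ : S} (hτ : τ ∈ X) (t : Rˣ) :
    T.tilde X (T.act t τ) = ((t⁻¹ : Rˣ) : R) := by
  have h : ∃ s : Rˣ, T.act t τ ∈ T.act s '' X := ⟨t, τ, hτ, rfl⟩
  rw [tilde, dif_pos h]
  obtain ⟨τ', hτ', heq⟩ := Classical.choose_spec h
  have hq : T.q τ' = T.q τ := by
    have := congrArg T.q heq
    rwa [T.q_act, T.q_act] at this
  have : τ' = τ := hX τ' hτ' τ hτ hq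
  subst this
  rw [T.act_cancel heq]

lemma tilde_mem {X : Set S} (hX : T.QInj X) {τ : S} (hτ : τ ∈ X) :
    T.tilde X τ = 1 := by
  have := T.tilde_act hX hτ 1
  rwa [T.act_one, inv_one, Units.val_one] at this

lemma tilde_zero {X : Set S} {σ : S} (h : T.q σ ∉ T.q '' X) : T.tilde X σ = 0 := by
  rw [tilde, dif_neg]
  rintro ⟨t, τ, hτ, rfl⟩
  exact h ⟨τ, hτ, (T.q_act t τ).symm⟩

end AuxTwist

end DiscreteTwist
/-- if `g = ∑_{D ∈ F} a_D 1̃_D` with `F` a finite collection of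
compact open bisections of `Σ` with mutually disjoint images in `G`, then for any
`D₀ ∈ F`, the function `f = 1̃_{D₀⁻¹} * g` takes the value `a_{D₀}` on every point
of `s(D₀) ⊆ Σ⁽⁰⁾`; in particular `f` is nonzero on `Σ⁽⁰⁾` when `a_{D₀} ≠ 0`. -/
theorem stmt_5 {R : Type*} [CommRing R] {G S : Type*}
    [TopologicalSpace G] [TopologicalSpace S] [T2Space G] [T2Space S]
    {𝒢 : AmpleGroupoid G} {𝒮 : EtaleGroupoid S} (T : DiscreteTwist R 𝒢 𝒮)
    (F : Finset (Set S)) (hCOB : ∀ D ∈ F, 𝒮.IsCOB D)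
    (hdisj : ∀ D₁ ∈ F, ∀ D₂ ∈ F, D₁ ≠ D₂ → Disjoint (T.q '' D₁) (T.q '' D₂))
    (a : Set S → R) (D₀ : Set S) (hD₀ : D₀ ∈ F) :
    (𝒮.src '' D₀ ⊆ 𝒮.unitSpace) ∧
    (∀ σ ∈ 𝒮.src '' D₀,
      T.conv (T.tilde (𝒮.setInv D₀)) (fun τ => ∑ D ∈ F, a D * T.tilde D τ) σ = a D₀) ∧
    (D₀.Nonempty → a D₀ ≠ 0 → ∃ σ ∈ 𝒮.unitSpace,
      T.conv (T.tilde (𝒮.setInv D₀)) (fun τ => ∑ D ∈ F, a D * T.tilde D τ) σ ≠ 0) := by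
  classical
  have hsub : 𝒮.src '' D₀ ⊆ 𝒮.unitSpace := by
    rintro _ ⟨δ, _, rfl⟩; exact EG.src_mem 𝒮 δ
  have hbis : 𝒮.IsBisection D₀ := (hCOB D₀ hD₀).2.2
  have hq0 : T.QInj D₀ := T.qinj_of_bisection hbis
  have hqi : T.QInj (𝒮.setInv D₀) := T.qinj_setInv hbis
  have key : ∀ σ ∈ 𝒮.src '' D₀,
      T.conv (T.tilde (𝒮.setInv D₀)) (fun τ => ∑ D ∈ F, a D * T.tilde D τ) σ = a D₀ := by
    rintro _ ⟨δ, hδ, rfl⟩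
    have hqσ : T.q (𝒮.src δ) = 𝒢.src (T.q δ) := T.q_src δ
    have hrqσ : 𝒢.rng (T.q (𝒮.src δ)) = 𝒢.src (T.q δ) := by
      rw [hqσ]; exact EG.rng_src 𝒢.toEtaleGroupoid (T.q δ)
    set α₀ := 𝒢.inv (T.q δ) with hα₀
    have hrα₀ : 𝒢.rng α₀ = 𝒢.rng (T.q (𝒮.src δ)) := by
      rw [hα₀, 𝒢.rng_inv, hrqσ]
    have hqsec : ∀ α : G, T.q (T.sec α) = α := fun α => Function.surjInv_eq T.q_surj α
    -- the term function of the finsum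
    set h : G → R := fun α =>
      if 𝒢.rng α = 𝒢.rng (T.q (𝒮.src δ)) then
        T.tilde (𝒮.setInv D₀) (T.sec α) *
          (∑ D ∈ F, a D * T.tilde D (𝒮.mul (𝒮.inv (T.sec α)) (𝒮.src δ))) else 0
      with hh
    have hzero : ∀ α : G, α ≠ α₀ → h α = 0 := by
      intro α hne
      simp only [hh]
      by_cases hc : 𝒢.rng α = 𝒢.rng (T.q (𝒮.src δ))
      · rw [if_pos hc]
        have hft : T.tilde (𝒮.setInv D₀) (T.sec α) = 0 := by
          by_contra hft
          have hex : ∃ t : Rˣ, T.sec α ∈ T.act t '' (𝒮.setInv D₀) := by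
            by_contra hx
            exact hft (by rw [DiscreteTwist.tilde, dif_neg hx])
          obtain ⟨t, τ, hτ, hsec⟩ := hex
          obtain ⟨δ', hδ', rfl⟩ := hτ
          have hqα : α = 𝒢.inv (T.q δ') := by
            rw [← hqsec α, ← hsec, T.q_act, T.q_inv]
          have hsrceq : 𝒢.src (T.q δ') = 𝒢.src (T.q δ) := by
            rw [← 𝒢.rng_inv, ← hqα, hc, hrqσ]
          have : 𝒮.src δ' = 𝒮.src δ := by
            refine T.unit_eq_of_q (EG.src_mem 𝒮 _) (EG.src_mem 𝒮 _) ?_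
            rw [T.q_src, T.q_src, hsrceq]
          have : δ' = δ := hbis.1 hδ' hδ this
          exact hne (by rw [hqα, this, hα₀])
        rw [hft, zero_mul]
      · rw [if_neg hc]
    have hterm : h α₀ = a D₀ := by
      simp only [hh]
      rw [if_pos hrα₀]
      have hq' : T.q (T.sec α₀) = T.q (𝒮.inv δ) := by rw [hqsec, T.q_inv, hα₀]
      obtain ⟨t, hsec⟩ := T.exists_act_of_q_eq hq'
      have hf1 : T.tilde (𝒮.setInv D₀) (T.sec α₀) = ((t⁻¹ : Rˣ) : R) := by
        rw [hsec]; exact T.tilde_act hqi ⟨δ, hδ, rfl⟩ t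
      have hinv : 𝒮.inv (T.sec α₀) = T.act t⁻¹ δ := by
        rw [hsec, T.inv_act, 𝒮.inv_inv]
      have hρ : 𝒮.mul (𝒮.inv (T.sec α₀)) (𝒮.src δ) = T.act t⁻¹ δ := by
        rw [hinv, ← T.src_act t⁻¹ δ, 𝒮.mul_src_self]
      rw [hf1, hρ]
      have hsum : (∑ D ∈ F, a D * T.tilde D (T.act t⁻¹ δ)) = a D₀ * ((t : Rˣ) : R) := by
        rw [Finset.sum_eq_single D₀]
        · rw [T.tilde_act hq0 hδ t⁻¹, inv_inv]
        · intro D hD hne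
          have hmem : T.q (T.act t⁻¹ δ) ∈ T.q '' D₀ := by
            rw [T.q_act]; exact ⟨δ, hδ, rfl⟩
          have : T.q (T.act t⁻¹ δ) ∉ T.q '' D :=
            fun hmm => Set.disjoint_left.mp (hdisj D hD D₀ hD₀ hne) hmm hmem
          rw [T.tilde_zero this, mul_zero]
        · intro hD; exact absurd hD₀ hD
      rw [hsum]
      calc ((t⁻¹ : Rˣ) : R) * (a D₀ * ((t : Rˣ) : R))
          = a D₀ * (((t⁻¹ : Rˣ) : R) * ((t : Rˣ) : R)) := by ring
        _ = a D₀ := by rw [← Units.val_mul, inv_mul_cancel, Units.val_one, mul_one]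
    have : T.conv (T.tilde (𝒮.setInv D₀)) (fun τ => ∑ D ∈ F, a D * T.tilde D τ) (𝒮.src δ)
        = ∑ᶠ α : G, h α := rfl
    rw [this, finsum_eq_single h α₀ hzero, hterm]
  refine ⟨hsub, key, ?_⟩
  rintro ⟨δ, hδ⟩ ha
  refine ⟨𝒮.src δ, hsub ⟨δ, hδ, rfl⟩, ?_⟩
  rw [key (𝒮.src δ) ⟨δ, hδ, rfl⟩]
  exact ha
end

section
/- Let G be a second-countable ample Hausdorff groupoid and (Σ, i, q) a discrete twist over G. Then the set X_Σ = {u ∈ Σ⁽⁰⁾ : Σᵤᵘ ⊆ Iso(Σ)°} is dense in Σ⁽⁰⁾. -/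
open Set Function TopologicalSpace Classical
open Set Function TopologicalSpace Classical

section Helpers

namespace EtaleGroupoid

variable {G : Type*} [TopologicalSpace G] (𝒢 : EtaleGroupoid G)

lemma rng_src (g : G) : 𝒢.rng (𝒢.src g) = 𝒢.src g := by
  have h := 𝒢.rng_mul (𝒢.inv g) g (by rw [𝒢.src_inv])
  rw [𝒢.inv_mul_self, 𝒢.rng_inv] at h
  exact h

lemma src_src (g : G) : 𝒢.src (𝒢.src g) = 𝒢.src g := by
  have h := 𝒢.src_mul g (𝒢.src g) (by rw [𝒢.rng_src])
  rw [𝒢.mul_src_self] at h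
  exact h.symm

lemma continuous_src : Continuous 𝒢.src := 𝒢.isLocalHomeomorph_src.continuous

lemma continuous_rng : Continuous 𝒢.rng := by
  have : 𝒢.rng = fun g => 𝒢.src (𝒢.inv g) := by
    funext g; rw [𝒢.src_inv]
  rw [this]
  exact 𝒢.continuous_src.comp 𝒢.continuous_inv

lemma unitSpace_eq : 𝒢.unitSpace = {g | 𝒢.src g = g} := by
  ext g
  constructor
  · rintro ⟨a, rfl⟩; exact 𝒢.src_src a
  · intro h; exact ⟨g, h⟩

lemma src_mem_unitSpace (g : G) : 𝒢.src g ∈ 𝒢.unitSpace := ⟨g, rfl⟩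

lemma rng_mem_unitSpace (g : G) : 𝒢.rng g ∈ 𝒢.unitSpace := by
  rw [← 𝒢.src_inv]; exact ⟨_, rfl⟩

lemma src_of_unit {x : G} (hx : x ∈ 𝒢.unitSpace) : 𝒢.src x = x := by
  rw [𝒢.unitSpace_eq] at hx; exact hx

lemma rng_of_unit {x : G} (hx : x ∈ 𝒢.unitSpace) : 𝒢.rng x = x := by
  obtain ⟨a, rfl⟩ := hx; exact 𝒢.rng_src a

lemma isClosed_unitSpace [T2Space G] : IsClosed 𝒢.unitSpace := by
  rw [𝒢.unitSpace_eq]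
  exact isClosed_eq 𝒢.continuous_src continuous_id

lemma isClosed_iso [T2Space G] : IsClosed 𝒢.iso :=
  isClosed_eq 𝒢.continuous_rng 𝒢.continuous_src

end EtaleGroupoid

lemma AmpleGroupoid.locallyCompact {G : Type*} [TopologicalSpace G]
    (𝒢 : AmpleGroupoid G) : LocallyCompactSpace G := by
  constructor
  intro x n hn
  obtain ⟨U, hU, hxU, hUn⟩ := 𝒢.ample.mem_nhds_iff.mp hn
  exact ⟨U, hU.2.1.mem_nhds hxU, hUn, hU.1⟩

/-- BNSW density in the untwisted ample groupoid. -/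
theorem XG_dense {G : Type*} [TopologicalSpace G] [T2Space G]
    [SecondCountableTopology G] (𝒢 : AmpleGroupoid G) :
    𝒢.unitSpace ⊆ closure
      {x ∈ 𝒢.unitSpace | 𝒢.toEtaleGroupoid.isoAt x ⊆ interior 𝒢.toEtaleGroupoid.iso} := by
  classical
  set E := 𝒢.toEtaleGroupoid with hE
  set Y : Set G := E.iso \ interior E.iso with hY
  have hYclosed : IsClosed Y := E.isClosed_iso.sdiff isOpen_interior
  -- countable family of compact open bisections covering G
  obtain ⟨T, hTc, hTsub, hTun⟩ :=
    TopologicalSpace.isOpen_sUnion_countable {U : Set G | E.IsCOB U}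
      (fun s hs => hs.2.1)
  have hTuniv : ⋃₀ T = univ := by rw [hTun, 𝒢.ample.sUnion_eq]
  -- work in the subtype of the unit space
  haveI : LocallyCompactSpace G := 𝒢.locallyCompact
  haveI : LocallyCompactSpace E.unitSpace := E.isClosed_unitSpace.locallyCompactSpace
  set K := E.unitSpace with hK
  set C : Set G → Set K := fun B => (Subtype.val : K → G) ⁻¹' (E.src '' (B ∩ Y)) with hC
  have hCclosed : ∀ B ∈ T, IsClosed (C B) := by
    intro B hB
    have hcomp : IsCompact (E.src '' (B ∩ Y)) :=
      (((hTsub hB).1).inter_right hYclosed).image E.continuous_src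
    exact hcomp.isClosed.preimage continuous_subtype_val
  have hCint : ∀ B ∈ T, interior (C B) = ∅ := by
    intro B hB
    by_contra h
    obtain ⟨z, hz⟩ := Set.nonempty_iff_ne_empty.mpr h
    obtain ⟨V, hVopen, hVeq⟩ := isOpen_induced_iff.mp (isOpen_interior (s := C B))
    have hzV : (z : G) ∈ V := by rw [← hVeq] at hz; exact hz
    have hVsub : (Subtype.val : K → G) ⁻¹' V ⊆ C B := by
      rw [hVeq]; exact interior_subset
    -- z itself is in C B
    have hzCB : z ∈ C B := hVsub hzV
    obtain ⟨δ, hδBY, hδsrc⟩ := hzCB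
    -- the open set W
    set W : Set G := B ∩ E.src ⁻¹' V with hW
    have hWopen : IsOpen W := (hTsub hB).2.1.inter (hVopen.preimage E.continuous_src)
    have hWiso : W ⊆ E.iso := by
      rintro γ ⟨hγB, hγV⟩
      have hsK : E.src γ ∈ K := E.src_mem_unitSpace γ
      have : (⟨E.src γ, hsK⟩ : K) ∈ C B := hVsub hγV
      obtain ⟨δ', hδ'BY, hδ'src⟩ := this
      have : δ' = γ := (hTsub hB).2.2.1 hδ'BY.1 hγB hδ'src
      rw [← this]; exact hδ'BY.2.1
    have hδW : δ ∈ W := ⟨hδBY.1, by show E.src δ ∈ V; rw [hδsrc]; exact hzV⟩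
    have : δ ∈ interior E.iso :=
      interior_maximal hWiso hWopen hδW
    exact hδBY.2.2 this
  -- Baire category
  set S : Set (Set K) := (fun B => (C B)ᶜ) '' T with hS
  have hdense : Dense (⋂₀ S) := by
    apply dense_sInter_of_isOpen
    · rintro s ⟨B, hB, rfl⟩; exact (hCclosed B hB).isOpen_compl
    · exact hTc.image _
    · rintro s ⟨B, hB, rfl⟩
      exact interior_eq_empty_iff_dense_compl.mp (hCint B hB)
  -- the intersection is contained in the good set
  set X : Set G := {x ∈ E.unitSpace | E.isoAt x ⊆ interior E.iso} with hX
  have hsub : ⋂₀ S ⊆ (Subtype.val : K → G) ⁻¹' X := by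
    intro w hw
    refine ⟨w.2, ?_⟩
    intro γ hγ
    by_contra hγint
    have hγiso : γ ∈ E.iso := by
      show E.rng γ = E.src γ; rw [hγ.1, hγ.2]
    have hγY : γ ∈ Y := ⟨hγiso, hγint⟩
    have : γ ∈ ⋃₀ T := by rw [hTuniv]; trivial
    obtain ⟨B, hB, hγB⟩ := this
    have : w ∈ C B := ⟨γ, ⟨hγB, hγY⟩, hγ.2⟩
    exact (hw _ ⟨B, hB, rfl⟩) this
  -- conclude
  intro x hx
  have hzcl : (⟨x, hx⟩ : K) ∈ closure (⋂₀ S) := hdense _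
  have hzcl2 : (⟨x, hx⟩ : K) ∈ closure ((Subtype.val : K → G) ⁻¹' X) :=
    closure_mono hsub hzcl
  have := closure_subtype.mp hzcl2
  refine closure_mono ?_ this
  rintro y ⟨w, hw, rfl⟩
  exact hw

end Helpers

section Lift

variable {R : Type w} [CommRing R] {G : Type u} {S : Type v}
  [TopologicalSpace G] [TopologicalSpace S]
  {𝒢 : AmpleGroupoid G} {𝒮 : EtaleGroupoid S} (T : DiscreteTwist R 𝒢 𝒮)

lemma DiscreteTwist.q_i_s8 {x : G} (hx : x ∈ 𝒢.toEtaleGroupoid.unitSpace) (t : Rˣ) :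
    T.q (T.i x t) = x := by
  have h : T.i x t ∈ T.q ⁻¹' {x} := by
    rw [T.exact' x hx]; exact ⟨t, rfl⟩
  exact h

/-- Lifting: if `q u` has its isotropy in the interior of `Iso(G)`, so does `u` in `Σ`. -/
lemma DiscreteTwist.lift_mem {u : S} (hu : u ∈ 𝒮.unitSpace)
    (hq : 𝒢.toEtaleGroupoid.isoAt (T.q u) ⊆ interior 𝒢.toEtaleGroupoid.iso) :
    𝒮.isoAt u ⊆ interior 𝒮.iso := by
  set E := 𝒢.toEtaleGroupoid with hE
  intro σ hσ
  obtain ⟨hσr, hσs⟩ := hσ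
  -- q σ lies in the interior of Iso(G)
  have hqσ : T.q σ ∈ interior E.iso := by
    refine hq ⟨?_, ?_⟩
    · rw [← T.q_rng, hσr]
    · rw [← T.q_src, hσs]
  obtain ⟨B, hBopen, hqσB, hBbis, P, hPcont, hPsec, hPcont2, hPuniq, hPopen⟩ :=
    T.loc_triv (T.q σ)
  -- the key computation: q of the twisted lift of β is β
  have L1 : ∀ β ∈ B, ∀ t : Rˣ, T.q (𝒮.mul (T.i (E.rng β) t) (P β)) = β := by
    intro β hβ t
    have hxu : E.rng β ∈ E.unitSpace := E.rng_mem_unitSpace β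
    have hqι : T.q (T.i (E.rng β) t) = E.rng β := T.q_i_s8 hxu t
    have hcomp : 𝒮.src (T.i (E.rng β) t) = 𝒮.rng (P β) := by
      apply T.q_unit_bij.2.1 (𝒮.src_mem_unitSpace _) (𝒮.rng_mem_unitSpace _)
      rw [T.q_src, T.q_rng, hqι, hPsec β hβ, E.src_of_unit hxu]
    rw [T.q_mul _ _ hcomp, hqι, hPsec β hβ, E.rng_mul_self]
  -- the unique decomposition of σ
  obtain ⟨⟨β₀, t₀⟩, ⟨hβ₀B, hβ₀eq⟩, -⟩ := hPuniq σ hqσB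
  have hβ₀ : β₀ = T.q σ := by rw [← hβ₀eq, L1 β₀ hβ₀B t₀]
  -- the open neighbourhood
  set V : Set G := B ∩ interior E.iso with hV
  have hVopen : IsOpen V := hBopen.inter isOpen_interior
  have himg := hPopen t₀ V Set.inter_subset_left hVopen
  have hmem : σ ∈ (fun β => 𝒮.mul (T.i (E.rng β) t₀) (P β)) '' V :=
    ⟨β₀, by rw [hβ₀]; exact ⟨hqσB, hqσ⟩, hβ₀eq⟩
  have hsub : (fun β => 𝒮.mul (T.i (E.rng β) t₀) (P β)) '' V ⊆ 𝒮.iso := by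
    rintro _ ⟨β, ⟨hβB, hβint⟩, rfl⟩
    have hqσ' : T.q (𝒮.mul (T.i (E.rng β) t₀) (P β)) = β := L1 β hβB t₀
    have hβiso' : β ∈ E.iso := interior_subset hβint
    have hβiso : E.rng β = E.src β := hβiso'
    apply T.q_unit_bij.2.1 (𝒮.rng_mem_unitSpace _) (𝒮.src_mem_unitSpace _)
    rw [T.q_rng, T.q_src, hqσ', hβiso]
  exact interior_maximal hsub himg hmem

end Lift

/-- for a second-countable ample Hausdorff groupoid `G` and a
discrete twist `(Σ,i,q)` over `G`, the set
`X_Σ = {u ∈ Σ⁽⁰⁾ : Σᵤᵘ ⊆ Iso(Σ)°}` is dense in `Σ⁽⁰⁾`. -/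

theorem stmt_8 {R : Type*} [CommRing R] {G S : Type*}
    [TopologicalSpace G] [TopologicalSpace S] [T2Space G] [T2Space S]
    [SecondCountableTopology G]
    {𝒢 : AmpleGroupoid G} {𝒮 : EtaleGroupoid S} (T : DiscreteTwist R 𝒢 𝒮) :
    𝒮.unitSpace ⊆ closure {u ∈ 𝒮.unitSpace | 𝒮.isoAt u ⊆ interior 𝒮.iso} := by
  intro u hu
  set E := 𝒢.toEtaleGroupoid with hE
  have hqu : T.q u ∈ E.unitSpace := by
    obtain ⟨a, rfl⟩ := hu
    rw [T.q_src]; exact E.src_mem_unitSpace _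
  set X : Set G := {x ∈ E.unitSpace | E.isoAt x ⊆ interior E.iso} with hX
  have hXd : T.q u ∈ closure X := XG_dense 𝒢 hqu
  set j : G → S := fun x => T.i x 1 with hj
  have hjunit : ∀ x ∈ E.unitSpace, j x ∈ 𝒮.unitSpace := by
    intro x hx; rw [T.unit_eq]; exact ⟨x, hx, rfl⟩
  have hju : j (T.q u) = u :=
    T.q_unit_bij.2.1 (hjunit _ hqu) hu (T.q_i_s8 hqu 1)
  have hmaps : ∀ x ∈ X, j x ∈ {u ∈ 𝒮.unitSpace | 𝒮.isoAt u ⊆ interior 𝒮.iso} := by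
    intro x hx
    refine ⟨hjunit _ hx.1, T.lift_mem (hjunit _ hx.1) ?_⟩
    rw [T.q_i_s8 hx.1 1]
    exact hx.2
  have hc : ContinuousWithinAt j X (T.q u) :=
    ((T.continuousOn_i 1) (T.q u) hqu).mono (fun x hx => hx.1)
  have := hc.mem_closure_image hXd
  rw [hju] at this
  refine closure_mono ?_ this
  rintro _ ⟨x, hx, rfl⟩
  exact hmaps x hx
end

section
/- Let G be a second-countable locally compact Hausdorff étale groupoid. Then the set of units x ∈ G⁽⁰⁾ whose isotropy group Gₓˣ is entirely contained in the interior of Iso(G) is dense in G⁽⁰⁾. -/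
open Set Function TopologicalSpace Classical
/-- A set that is relatively closed in an open set containing it and has empty
interior is nowhere dense. -/
theorem aux_nwd {X : Type*} [TopologicalSpace X] {A U : Set X} (hU : IsOpen U)
    (hAU : A ⊆ U) (hclosed : closure A ∩ U ⊆ A) (hint : interior A = ∅) :
    interior (closure A) = ∅ := by
  rw [eq_empty_iff_forall_notMem]
  intro x hx
  obtain ⟨y, hyW, hyA⟩ := mem_closure_iff.1 (interior_subset hx) _ isOpen_interior hx
  have : y ∈ interior A := (isOpen_interior.inter hU).subset_interior_iff.2
    (fun z hz => hclosed ⟨interior_subset hz.1, hz.2⟩) ⟨hyW, hAU hyA⟩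
  simp [hint] at this

/-- Brown–Nagy–Sims–Williams: for a second-countable locally
compact Hausdorff étale groupoid `G`, the units whose isotropy group lies in
`Iso(G)°` are dense in `G⁽⁰⁾`. -/
theorem stmt_9 {G : Type*} [TopologicalSpace G] [T2Space G]
    [LocallyCompactSpace G] [SecondCountableTopology G] (𝒢 : EtaleGroupoid G) :
    𝒢.unitSpace ⊆ closure {x ∈ 𝒢.unitSpace | 𝒢.isoAt x ⊆ interior 𝒢.iso} := by
  classical
  have hsc : Continuous 𝒢.src := 𝒢.isLocalHomeomorph_src.continuous
  have hrc : Continuous 𝒢.rng := by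
    have h : 𝒢.rng = 𝒢.src ∘ 𝒢.inv := by funext g; exact (𝒢.src_inv g).symm
    rw [h]; exact hsc.comp 𝒢.continuous_inv
  -- the "bad" part of the isotropy bundle
  set D : Set G := 𝒢.iso \ interior 𝒢.iso with hDdef
  have hDclosed : IsClosed D := (isClosed_eq hrc hsc).sdiff isOpen_interior
  have hDint : interior D = ∅ := by
    rw [eq_empty_iff_forall_notMem]
    intro x hx
    exact (interior_subset hx).2 (interior_mono diff_subset hx)
  -- local charts for `src`
  choose e he hesrc using 𝒢.isLocalHomeomorph_src
  -- countable subcover of the chart sources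
  obtain ⟨t, htc, htU⟩ := TopologicalSpace.isOpen_iUnion_countable
    (fun γ : G => (e γ).source) (fun γ => (e γ).open_source)
  -- the images of the bad sets in the unit space
  set E : G → Set G := fun γ => 𝒢.src '' ((e γ).source ∩ D) with hE
  have hEsub : ∀ γ, E γ ⊆ (e γ).target := by
    intro γ z hz
    obtain ⟨w, hw, rfl⟩ := hz
    rw [hesrc γ]
    exact (e γ).map_source hw.1
  have hEnwd : ∀ γ, interior (closure (E γ)) = ∅ := by
    intro γ
    refine aux_nwd (e γ).open_target (hEsub γ) ?_ ?_
    · -- relatively closed in the target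
      rintro z ⟨hzc, hzt⟩
      have hys : (e γ).symm z ∈ (e γ).source := (e γ).map_target hzt
      have hcont : ContinuousAt (e γ).symm z :=
        (e γ).continuousOn_symm.continuousAt ((e γ).open_target.mem_nhds hzt)
      have hclos : (e γ).symm z ∈ closure ((e γ).symm '' E γ) :=
        mem_closure_image hcont hzc
      have himg : (e γ).symm '' E γ = (e γ).source ∩ D := by
        have : E γ = ⇑(e γ) '' ((e γ).source ∩ D) := by rw [hE, hesrc γ]
        rw [this]
        exact (e γ).symm_image_image_of_subset_source inter_subset_left
      rw [himg] at hclos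
      have hD : (e γ).symm z ∈ D :=
        hDclosed.closure_subset (closure_mono inter_subset_right hclos)
      refine ⟨(e γ).symm z, ⟨hys, hD⟩, ?_⟩
      rw [hesrc γ]
      exact (e γ).right_inv hzt
    · -- empty interior
      rw [eq_empty_iff_forall_notMem]
      intro z hz
      have hzt : z ∈ (e γ).target := hEsub γ (interior_subset hz)
      have hys : (e γ).symm z ∈ (e γ).source := (e γ).map_target hzt
      set S : Set G := (e γ).source ∩ ⇑(e γ) ⁻¹' (interior (E γ)) with hS
      have hSopen : IsOpen S :=
        (e γ).continuousOn.isOpen_inter_preimage (e γ).open_source isOpen_interior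
      have hSD : S ⊆ D := by
        rintro w ⟨hw1, hw2⟩
        obtain ⟨v, hv, hve⟩ := interior_subset hw2
        have : v = w := (e γ).injOn hv.1 hw1 (by simpa [hesrc γ] using hve)
        exact this ▸ hv.2
      have hyS : (e γ).symm z ∈ S := by
        refine ⟨hys, ?_⟩
        show ⇑(e γ) ((e γ).symm z) ∈ interior (E γ)
        rw [(e γ).right_inv hzt]; exact hz
      have : (e γ).symm z ∈ interior D :=
        hSopen.subset_interior_iff.2 hSD hyS
      simp [hDint] at this
  -- the residual set of good units
  have hres : (⋂ γ ∈ t, (closure (E γ))ᶜ) ∈ residual G := by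
    refine (countable_bInter_mem htc).2 fun γ _ => ?_
    exact residual_of_dense_open isClosed_closure.isOpen_compl
      (interior_eq_empty_iff_dense_compl.1 (hEnwd γ))
  have hdense : Dense (⋂ γ ∈ t, (closure (E γ))ᶜ) := dense_of_mem_residual hres
  have hUopen : IsOpen 𝒢.unitSpace := 𝒢.isLocalHomeomorph_src.isOpenMap.isOpen_range
  -- conclude
  intro x hx
  rw [mem_closure_iff]
  intro O hO hxO
  obtain ⟨y, ⟨hyO, hyU⟩, hyC⟩ :=
    hdense.inter_open_nonempty _ (hO.inter hUopen) ⟨x, hxO, hx⟩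
  refine ⟨y, hyO, hyU, ?_⟩
  intro γ hγ
  by_contra hγi
  have hγD : γ ∈ D := ⟨by show 𝒢.rng γ = 𝒢.src γ; rw [hγ.1, hγ.2], hγi⟩
  have : γ ∈ ⋃ δ ∈ t, (e δ).source := by
    rw [htU]; exact mem_iUnion.2 ⟨γ, he γ⟩
  obtain ⟨δ, hδt, hγδ⟩ := mem_iUnion₂.1 this
  have hyE : y ∈ E δ := ⟨γ, ⟨hγδ, hγD⟩, hγ.2⟩
  have := mem_iInter₂.1 hyC δ hδt
  exact this (subset_closure hyE)
end
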